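/- arXiv:2009.08449 — 3 statements merged into one kernel-verified Lean document; each statement's English description precedes it below -/
import Mathlib

section
/- Fix n ≥ 2 and for i = 1, ..., n define y(i) = (n(n-1) - i(i-1)) / (2 * Σ_{j=1}^{n-1} j^2). Attach label vector (y(1), ..., y(n)) to the point 0 and label vector (y(n), ..., y(1)) to the point n on the real line. Then for any x with 0 < x < n, the index of the maximal component of the vector with i-th entry y(i)/x + y(n+1-i)/(n - x) equals ⌈x⌉ whenever x is not an integer. In particular, two soft-label prototypes separate n classes. -/
/-- The soft label value `y(i) = (n(n-1) - i(i-1)) / (2 ∑_{j=1}^{n-1} j²)`. -/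
noncomputable def softLabel (n i : ℕ) : ℝ :=
  ((n : ℝ) * (n - 1) - (i : ℝ) * (i - 1)) / (2 * ∑ j ∈ Finset.Icc 1 (n - 1), (j : ℝ) ^ 2)

lemma softLabel_key (n i k x S : ℝ) (hS : 0 < S) (hx : 0 < x) (hxn : x < n)
    (hn : 0 < n)
    (hik : 0 < (i - k) * (i + k - 1 - 2 * x)) :
    (n * (n - 1) - i * (i - 1)) / (2 * S) / x
      + (n * (n - 1) - (n + 1 - i) * (n + 1 - i - 1)) / (2 * S) / (n - x)
    < (n * (n - 1) - k * (k - 1)) / (2 * S) / x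
      + (n * (n - 1) - (n + 1 - k) * (n + 1 - k - 1)) / (2 * S) / (n - x) := by
  rw [← sub_pos]
  have h1 : (0:ℝ) < n - x := by linarith
  have heq : (n * (n - 1) - k * (k - 1)) / (2 * S) / x
      + (n * (n - 1) - (n + 1 - k) * (n + 1 - k - 1)) / (2 * S) / (n - x)
      - ((n * (n - 1) - i * (i - 1)) / (2 * S) / x
      + (n * (n - 1) - (n + 1 - i) * (n + 1 - i - 1)) / (2 * S) / (n - x))
      = n * ((i - k) * (i + k - 1 - 2 * x)) / (2 * S * x * (n - x)) := by
    field_simp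
    ring
  rw [heq]
  apply div_pos (mul_pos hn hik)
  positivity

theorem stmt_2 (n : ℕ) (hn : 2 ≤ n) (x : ℝ) (hx0 : 0 < x) (hxn : x < n)
    (hxint : ∀ m : ℤ, x ≠ (m : ℝ)) :
    ∀ i : ℕ, 1 ≤ i → i ≤ n → i ≠ ⌈x⌉₊ →
      softLabel n i / x + softLabel n (n + 1 - i) / ((n : ℝ) - x)
        < softLabel n ⌈x⌉₊ / x + softLabel n (n + 1 - ⌈x⌉₊) / ((n : ℝ) - x) := by
  intro i hi1 hin hik
  set k := ⌈x⌉₊ with hk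
  have hS : 0 < ∑ j ∈ Finset.Icc 1 (n - 1), (j : ℝ) ^ 2 := by
    apply Finset.sum_pos'
    · intro j _; positivity
    · refine ⟨1, ?_, by norm_num⟩
      simp [Finset.mem_Icc]
      omega
  have hk1 : 1 ≤ k := by
    rw [hk]
    exact Nat.one_le_ceil_iff.mpr hx0
  have hkn : k ≤ n := by
    rw [hk, Nat.ceil_le]
    exact hxn.le
  have hxk : x < k := by
    rcases lt_or_eq_of_le (Nat.le_ceil x) with h | h
    · exact h
    · exact absurd h (hxint k)
  have hkx : (k : ℝ) - 1 < x := by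
    have : (k - 1 : ℕ) < ⌈x⌉₊ := by omega
    rw [Nat.lt_ceil] at this
    calc (k : ℝ) - 1 = ((k - 1 : ℕ) : ℝ) := by
          push_cast [Nat.cast_sub hk1]; ring
      _ < x := this
  have hcast_i : ((n + 1 - i : ℕ) : ℝ) = (n : ℝ) + 1 - i := by
    push_cast [Nat.cast_sub (by omega : i ≤ n + 1)]; ring
  have hcast_k : ((n + 1 - k : ℕ) : ℝ) = (n : ℝ) + 1 - k := by
    push_cast [Nat.cast_sub (by omega : k ≤ n + 1)]; ring
  simp only [softLabel, hcast_i, hcast_k]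
  apply softLabel_key _ _ _ _ _ hS hx0 hxn (by positivity)
  rcases lt_or_gt_of_ne hik with h | h
  · -- i < k : both factors negative
    have hik' : (i : ℝ) + 1 ≤ (k : ℝ) := by exact_mod_cast h
    apply mul_pos_of_neg_of_neg <;> nlinarith
  · -- i > k : both factors positive
    have hik' : (k : ℝ) + 1 ≤ (i : ℝ) := by exact_mod_cast h
    apply mul_pos <;> nlinarith
end

section
/- Let x1 = 0 and x2 = 3 on the real line with probabilistic labels y1, y2 ∈ R^3 satisfying the symmetry y1(i) = y2(4 - i). Suppose 2/3 > y1(1) > 1/2 > y1(2) > 1/3 > y1(3) ≥ 0, together with 4·y1(2) = 1 + y1(1) and 5·y1(2) = 2 − y1(3). Then the distance-weighted classifier at point x ∈ (0,3) given by argmax_i [y1(i)/x + y2(i)/(3 − x)] assigns class 1 on (0,1), class 2 on (1,2), and class 3 on (2,3). -/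
lemma key_div (x p q r s : ℝ) (hx0 : 0 < x) (hx3 : x < 3)
    (h : p * (3 - x) + q * x < r * (3 - x) + s * x) :
    p / x + q / (3 - x) < r / x + s / (3 - x) := by
  have h3 : 0 < 3 - x := by linarith
  rw [div_add_div _ _ hx0.ne' h3.ne', div_add_div _ _ hx0.ne' h3.ne',
    div_lt_div_iff₀ (mul_pos hx0 h3) (mul_pos hx0 h3)]
  nlinarith [mul_pos hx0 h3]

theorem stmt_5 (y1 y2 : ℕ → ℝ)
    (hprob1 : (∀ i, 1 ≤ i → i ≤ 3 → 0 ≤ y1 i) ∧ y1 1 + y1 2 + y1 3 = 1)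
    (hprob2 : (∀ i, 1 ≤ i → i ≤ 3 → 0 ≤ y2 i) ∧ y2 1 + y2 2 + y2 3 = 1)
    (hsym : ∀ i, 1 ≤ i → i ≤ 3 → y1 i = y2 (4 - i))
    (h1 : y1 1 < 2 / 3) (h2 : 1 / 2 < y1 1) (h3 : y1 2 < 1 / 2) (h4 : 1 / 3 < y1 2)
    (h5 : y1 3 < 1 / 3) (h6 : 0 ≤ y1 3)
    (heq1 : 4 * y1 2 = 1 + y1 1) (heq2 : 5 * y1 2 = 2 - y1 3)
    (x : ℝ) (hx0 : 0 < x) (hx3 : x < 3) :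
    (x < 1 → ∀ j, 1 ≤ j → j ≤ 3 → j ≠ 1 →
      y1 j / x + y2 j / (3 - x) < y1 1 / x + y2 1 / (3 - x)) ∧
    (1 < x → x < 2 → ∀ j, 1 ≤ j → j ≤ 3 → j ≠ 2 →
      y1 j / x + y2 j / (3 - x) < y1 2 / x + y2 2 / (3 - x)) ∧
    (2 < x → ∀ j, 1 ≤ j → j ≤ 3 → j ≠ 3 →
      y1 j / x + y2 j / (3 - x) < y1 3 / x + y2 3 / (3 - x)) := by
  have hs1 : y2 3 = y1 1 := (hsym 1 le_rfl (by norm_num)).symm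
  have hs2 : y2 2 = y1 2 := (hsym 2 (by norm_num) (by norm_num)).symm
  have hs3 : y2 1 = y1 3 := (hsym 3 (by norm_num) le_rfl).symm
  have hb : (0:ℝ) < 3 * y1 2 - 1 := by linarith
  refine ⟨?_, ?_, ?_⟩
  · intro hx j hj1 hj3 hjne
    interval_cases j
    · exact absurd rfl hjne
    · exact key_div x _ _ _ _ hx0 hx3 (by
        simp only [hs1, hs2, hs3]; nlinarith [mul_pos hb (show (0:ℝ) < 1 - x by linarith)])
    · exact key_div x _ _ _ _ hx0 hx3 (by
        simp only [hs1, hs2, hs3]; nlinarith [mul_pos hb (show (0:ℝ) < 1 - x by linarith)])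
  · intro hx1 hx2 j hj1 hj3 hjne
    interval_cases j
    · exact key_div x _ _ _ _ hx0 hx3 (by
        simp only [hs1, hs2, hs3]; nlinarith [mul_pos hb (show (0:ℝ) < x - 1 by linarith)])
    · exact absurd rfl hjne
    · exact key_div x _ _ _ _ hx0 hx3 (by
        simp only [hs1, hs2, hs3]; nlinarith [mul_pos hb (show (0:ℝ) < 2 - x by linarith)])
  · intro hx j hj1 hj3 hjne
    interval_cases j
    · exact key_div x _ _ _ _ hx0 hx3 (by
        simp only [hs1, hs2, hs3]; nlinarith [mul_pos hb (show (0:ℝ) < x - 2 by linarith)])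
    · exact key_div x _ _ _ _ hx0 hx3 (by
        simp only [hs1, hs2, hs3]; nlinarith [mul_pos hb (show (0:ℝ) < x - 2 by linarith)])
    · exact absurd rfl hjne
end

section
/- Let y ∈ R^n be a probabilistic soft label (nonnegative entries summing to 1) with strictly decreasing entries y(1) > y(2) > ... > y(n), and let y' be its reversal. For x ∈ (0, L), define f_i(x) = y(i)/x + y(n+1−i)/(L−x). Then for each i, the set {x ∈ (0, L) : f_i(x) > f_j(x) for all j ≠ i} is an open interval (possibly empty), and these intervals appear in order of increasing i along (0, L). -/
/-- On (0,L), comparing the two weighted sums reduces to an affine inequality. -/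
lemma key_affine (x L a b c d : ℝ) (hx : 0 < x) (hxL : x < L) :
    a / x + b / (L - x) < c / x + d / (L - x) ↔
      0 < (c - a) * L + ((a - c) + (d - b)) * x := by
  have h1 : 0 < L - x := by linarith
  rw [div_add_div _ _ (ne_of_gt hx) (ne_of_gt h1), div_add_div _ _ (ne_of_gt hx) (ne_of_gt h1),
      div_lt_div_iff_of_pos_right (mul_pos hx h1)]
  constructor <;> intro h <;> nlinarith

/-- An affine function positive at two points is positive in between. -/
lemma mid_affine (c d x1 x2 t : ℝ) (h1 : 0 < c + d * x1) (h2 : 0 < c + d * x2)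
    (ht1 : x1 ≤ t) (ht2 : t ≤ x2) : 0 < c + d * t := by
  rcases le_or_gt d 0 with hd | hd
  · nlinarith [mul_nonneg (neg_nonneg.2 hd) (sub_nonneg.2 ht2)]
  · nlinarith [mul_nonneg hd.le (sub_nonneg.2 ht1)]

/-- An open, bounded, order-convex subset of ℝ is an open interval. -/
lemma interval_of_open_conv (S : Set ℝ) (hopen : IsOpen S) (hbelow : BddBelow S)
    (habove : BddAbove S)
    (hconv : ∀ x1 ∈ S, ∀ x2 ∈ S, ∀ t, x1 ≤ t → t ≤ x2 → t ∈ S) :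
    ∃ a b : ℝ, S = Set.Ioo a b := by
  rcases S.eq_empty_or_nonempty with h | hne
  · exact ⟨0, 0, by simp [h]⟩
  refine ⟨sInf S, sSup S, ?_⟩
  ext x
  constructor
  · intro hx
    rw [Metric.isOpen_iff] at hopen
    obtain ⟨ε, hε, hball⟩ := hopen x hx
    have h1 : x - ε / 2 ∈ S := hball (by
      rw [Metric.mem_ball, Real.dist_eq, show x - ε / 2 - x = -(ε / 2) by ring, abs_neg,
        abs_of_pos (by linarith)]; linarith)
    have h2 : x + ε / 2 ∈ S := hball (by
      rw [Metric.mem_ball, Real.dist_eq, show x + ε / 2 - x = ε / 2 by ring,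
        abs_of_pos (by linarith)]; linarith)
    exact ⟨lt_of_le_of_lt (csInf_le hbelow h1) (by linarith),
      lt_of_lt_of_le (by linarith) (le_csSup habove h2)⟩
  · intro hx
    obtain ⟨x1, hx1, hx1t⟩ := exists_lt_of_csInf_lt hne hx.1
    obtain ⟨x2, hx2, htx2⟩ := exists_lt_of_lt_csSup hne hx.2
    exact hconv x1 hx1 x2 hx2 x hx1t.le htx2.le

theorem stmt_15 (n : ℕ) (hn : 1 ≤ n) (L : ℝ) (hL : 0 < L) (y : ℕ → ℝ)
    (hnn : ∀ i, 1 ≤ i → i ≤ n → 0 ≤ y i)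
    (hsum : ∑ i ∈ Finset.Icc 1 n, y i = 1)
    (hdec : ∀ i, 1 ≤ i → i < n → y (i + 1) < y i) :
    (∀ i, 1 ≤ i → i ≤ n → ∃ a b : ℝ,
      {x : ℝ | 0 < x ∧ x < L ∧ ∀ j, 1 ≤ j → j ≤ n → j ≠ i →
          y j / x + y (n + 1 - j) / (L - x) < y i / x + y (n + 1 - i) / (L - x)}
        = Set.Ioo a b) ∧
    (∀ i j, 1 ≤ i → i < j → j ≤ n →
      ∀ x ∈ {x : ℝ | 0 < x ∧ x < L ∧ ∀ l, 1 ≤ l → l ≤ n → l ≠ i →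
          y l / x + y (n + 1 - l) / (L - x) < y i / x + y (n + 1 - i) / (L - x)},
      ∀ x' ∈ {x : ℝ | 0 < x ∧ x < L ∧ ∀ l, 1 ≤ l → l ≤ n → l ≠ j →
          y l / x + y (n + 1 - l) / (L - x) < y j / x + y (n + 1 - j) / (L - x)},
      x < x') := by
  -- strict monotonicity of y on [1, n]
  have ymon : ∀ i j : ℕ, 1 ≤ i → i < j → j ≤ n → y j < y i := by
    intro i j hi
    induction j with
    | zero => intro h; omega
    | succ k ih =>
      intro hij hjn
      rcases Nat.lt_succ_iff_lt_or_eq.mp hij with h | h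
      · exact lt_trans (hdec k (by omega) (by omega)) (ih h (by omega))
      · subst h
        exact hdec i hi (by omega)
  constructor
  · -- each set is an open interval
    intro i hi1 hin
    apply interval_of_open_conv
    · -- open
      have hset : {x : ℝ | 0 < x ∧ x < L ∧ ∀ j, 1 ≤ j → j ≤ n → j ≠ i →
            y j / x + y (n + 1 - j) / (L - x) < y i / x + y (n + 1 - i) / (L - x)}
          = Set.Ioo 0 L ∩ ⋂ j ∈ (Finset.Icc 1 n).erase i,
              {x : ℝ | 0 < (y i - y j) * L +
                ((y j - y i) + (y (n + 1 - i) - y (n + 1 - j))) * x} := by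
        ext x
        simp only [Set.mem_setOf_eq, Set.mem_inter_iff, Set.mem_Ioo, Set.mem_iInter,
          Finset.mem_erase, Finset.mem_Icc]
        constructor
        · rintro ⟨h0, hL', h⟩
          exact ⟨⟨h0, hL'⟩, fun j hj =>
            (key_affine x L _ _ _ _ h0 hL').mp (h j hj.2.1 hj.2.2 hj.1)⟩
        · rintro ⟨⟨h0, hL'⟩, h⟩
          exact ⟨h0, hL', fun j hj1 hjn hne =>
            (key_affine x L _ _ _ _ h0 hL').mpr (h j ⟨hne, hj1, hjn⟩)⟩
      rw [hset]
      refine isOpen_Ioo.inter (isOpen_biInter_finset fun j _ => ?_)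
      exact isOpen_lt continuous_const (by continuity)
    · exact ⟨0, fun x hx => hx.1.le⟩
    · exact ⟨L, fun x hx => hx.2.1.le⟩
    · -- order-convex
      intro x1 h1 x2 h2 t ht1 ht2
      simp only [Set.mem_setOf_eq] at h1 h2 ⊢
      obtain ⟨h10, h1L, h1f⟩ := h1
      obtain ⟨h20, h2L, h2f⟩ := h2
      refine ⟨by linarith, by linarith, fun j hj1 hjn hne => ?_⟩
      have k1 := (key_affine x1 L _ _ _ _ h10 h1L).mp (h1f j hj1 hjn hne)
      have k2 := (key_affine x2 L _ _ _ _ h20 h2L).mp (h2f j hj1 hjn hne)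
      exact (key_affine t L _ _ _ _ (by linarith) (by linarith)).mpr
        (mid_affine _ _ _ _ _ k1 k2 ht1 ht2)
  · -- ordering of the intervals
    intro i j hi1 hij hjn x hx x' hx'
    simp only [Set.mem_setOf_eq] at hx hx'
    obtain ⟨hx0, hxL, hxf⟩ := hx
    obtain ⟨hx'0, hx'L, hx'f⟩ := hx'
    have k1 := (key_affine x L _ _ _ _ hx0 hxL).mp (hxf j (by omega) hjn (by omega))
    have k2 := (key_affine x' L _ _ _ _ hx'0 hx'L).mp (hx'f i hi1 (by omega) (by omega))
    -- k1 : 0 < (y i - y j) * L + ((y j - y i) + (y (n+1-i) - y (n+1-j))) * x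
    -- k2 : 0 < (y j - y i) * L + ((y i - y j) + (y (n+1-j) - y (n+1-i))) * x'
    have hA : y j < y i := ymon i j hi1 hij hjn
    have hB : y (n + 1 - i) < y (n + 1 - j) :=
      ymon (n + 1 - j) (n + 1 - i) (by omega) (by omega) (by omega)
    set D : ℝ := (y j - y i) + (y (n + 1 - i) - y (n + 1 - j)) with hD
    have hDneg : D < 0 := by rw [hD]; linarith
    by_contra h
    push_neg at h
    have : D * x ≤ D * x' := mul_le_mul_of_nonpos_left h hDneg.le
    nlinarith
end
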